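/- Let D = diag(d₁,d₂,d₃) be a diagonal real 3×3 matrix with d₁ ⩾ d₂ ⩾ |d₃|. Then for every B ∈ SO₃(ℝ), Tr(B D) ⩽ Tr(D), i.e. the maximum of B·D over B ∈ SO₃(ℝ) (for the inner product A·B = ½Tr(ABᵀ)) is attained at B = I₃. -/

import Mathlib

/-!
`Tr(BD) = Σ Bᵢᵢ dᵢ` depends only on the diagonal of `B`, and on the diagonal of a rotation
two kinds of linear constraints hold: every `Bᵢᵢ ≤ 1` (columns are unit vectors), and
`B₀₀ + B₁₁ - B₂₂ ≤ 1`, which is `tr(B · diag(-1,-1,1)) ≥ -1` for the rotation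
`B · diag(-1,-1,1)`. Under `d₀ ≥ d₁ ≥ |d₂|`, `Tr(D) - Tr(BD)` is a nonnegative combination of
these constraints.
-/

open Matrix

/-- The space of `3 × 3` real matrices. -/
abbrev Mat3 := Matrix (Fin 3) (Fin 3) ℝ

/-- `SO₃(ℝ)`: real `3 × 3` matrices with `AᵀA = I₃` and `det A = 1`. -/
def SO3 : Set Mat3 := {A | Aᵀ * A = 1 ∧ A.det = 1}

theorem Matrix.diag_le_one_of_transpose_mul_self_eq_one {n : Type*} [Fintype n] [DecidableEq n]
    {A : Matrix n n ℝ} (hA : Aᵀ * A = 1) (i : n) : A i i ≤ 1 := by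
  have hU : A ∈ unitaryGroup n ℝ := by
    rwa [mem_unitaryGroup_iff', star_eq_conjTranspose, conjTranspose_eq_transpose_of_trivial]
  exact (abs_le.mp (entry_norm_bound_of_unitary hU i i)).2

namespace SO3

theorem mul_mem {A B : Mat3} (hA : A ∈ SO3) (hB : B ∈ SO3) : A * B ∈ SO3 :=
  ⟨by rw [transpose_mul, Matrix.mul_assoc, ← Matrix.mul_assoc Aᵀ, hA.1, Matrix.one_mul, hB.1],
    by rw [det_mul, hA.2, hB.2, one_mul]⟩

theorem diagonal_neg_one_neg_one_one_mem : diagonal ![-1, -1, 1] ∈ SO3 := by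
  constructor
  · rw [diagonal_transpose, diagonal_mul_diagonal, ← diagonal_one]
    congr 1
    ext i
    fin_cases i <;> norm_num
  · simp [det_diagonal, Fin.prod_univ_three]

theorem adjugate_eq_transpose {R : Mat3} (hR : R ∈ SO3) : R.adjugate = Rᵀ := by
  rw [← inv_eq_left_inv hR.1, inv_def, hR.2, Ring.inverse_one, one_smul]

theorem neg_one_le_trace {R : Mat3} (hR : R ∈ SO3) : -1 ≤ R.trace := by
  have hcol (j : Fin 3) : R 0 j ^ 2 + R 1 j ^ 2 + R 2 j ^ 2 = 1 := by
    simpa [mul_apply, Fin.sum_univ_three, sq] using congrFun (congrFun hR.1 j) j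
  have hcof (i : Fin 3) := congrFun (congrFun (adjugate_eq_transpose hR) i) i
  have h0 := hcof 0
  have h1 := hcof 1
  have h2 := hcof 2
  simp only [Fin.isValue, adjugate_fin_three, of_apply, cons_val', cons_val_zero,
    cons_val_fin_one, transpose_apply, cons_val_one, cons_val] at h0 h1 h2
  -- With `1 + tr R = 4w²` for the unit quaternion `(w, v)` of `R`, this is `|v|² + w² = 1`.
  have key : (R 1 0 - R 0 1) ^ 2 + (R 0 2 - R 2 0) ^ 2 + (R 2 1 - R 1 2) ^ 2 + (1 + R.trace) ^ 2
      = 4 * (1 + R.trace) := by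
    rw [trace_fin_three]
    linear_combination hcol 0 + hcol 1 + hcol 2 + 2 * h0 + 2 * h1 + 2 * h2
  linarith [sq_nonneg (R 1 0 - R 0 1), sq_nonneg (R 0 2 - R 2 0), sq_nonneg (R 2 1 - R 1 2),
    sq_nonneg (1 + R.trace)]

end SO3

theorem mul_add_mul_add_mul_le {a b c x y z : ℝ} (ha : a ≤ 1) (hb : b ≤ 1) (hc : c ≤ 1)
    (habc : a + b - c ≤ 1) (hxy : y ≤ x) (hyz : |z| ≤ y) :
    a * x + b * y + c * z ≤ x + y + z := by
  obtain ⟨hzy, hyz'⟩ := abs_le.mp hyz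
  rcases le_or_gt 0 z with hz | hz
  · linarith [mul_nonneg (sub_nonneg.mpr hxy) (sub_nonneg.mpr ha),
      mul_nonneg (sub_nonneg.mpr hyz') (by linarith : (0 : ℝ) ≤ 2 - a - b),
      mul_nonneg hz (by linarith : (0 : ℝ) ≤ 3 - a - b - c)]
  · linarith [mul_nonneg (sub_nonneg.mpr hxy) (sub_nonneg.mpr ha),
      mul_nonneg (by linarith : (0 : ℝ) ≤ y + z) (by linarith : (0 : ℝ) ≤ 2 - a - b),
      mul_nonneg (by linarith : (0 : ℝ) ≤ -z) (by linarith : (0 : ℝ) ≤ 1 - a - b + c)]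

theorem trace_mul_diagonal_le (d : Fin 3 → ℝ) (hd1 : d 1 ≤ d 0) (hd2 : |d 2| ≤ d 1) :
    ∀ B ∈ SO3, (B * Matrix.diagonal d).trace ≤ (Matrix.diagonal d).trace := by
  intro B hB
  have hdiag := diag_le_one_of_transpose_mul_self_eq_one hB.1
  have hflip : -1 ≤ -B 0 0 - B 1 1 + B 2 2 := by
    simpa [trace_fin_three, sub_eq_add_neg] using
      SO3.neg_one_le_trace (SO3.mul_mem hB SO3.diagonal_neg_one_neg_one_one_mem)
  simp only [trace_fin_three, mul_diagonal, diagonal_apply_eq]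
  exact mul_add_mul_add_mul_le (hdiag 0) (hdiag 1) (hdiag 2) (by linarith) hd1 hd2
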